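/- arXiv:2401.16399 — 9 statements merged into one kernel-verified Lean document; each statement's English description precedes it below -/
import Mathlib

section
/- Similarity of candidates and being clones are incomparable notions: there exists an election with alliances in which two candidates are clones but not similar, and two candidates are similar but not clones. -/
/-- Candidates `a` and `b` are clones: no voter ranks any third candidate
strictly between them. -/
def Clones {C : Type*} [Fintype C] {n : ℕ} (v : Fin n → C → ℕ) (a b : C) : Prop :=
  ∀ i : Fin n, ∀ e : C, e ≠ a → e ≠ b →
    ¬ (v i a < v i e ∧ v i e < v i b) ∧ ¬ (v i b < v i e ∧ v i e < v i a)

/-- Candidates `a` and `b` are similar allies (w.r.t. the alliance map `A`):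
they belong to the same alliance and no voter ranks a common opponent strictly
between them. -/
def SimilarAllies {C : Type*} [Fintype C] {n : ℕ} (v : Fin n → C → ℕ)
    (A : C → Finset C) (a b : C) : Prop :=
  A a = A b ∧
    ∀ i : Fin n, ∀ e : C, e ∉ A a →
      ¬ (v i a < v i e ∧ v i e < v i b) ∧ ¬ (v i b < v i e ∧ v i e < v i a)

/-- Similarity and being clones are incomparable notions: there is an election
with alliances containing two candidates that are clones but not similar, and two
candidates that are similar but not clones. -/
theorem similar_and_clones_incomparable :
    ∃ (n : ℕ) (v : Fin n → Fin 4 → ℕ) (A : Fin 4 → Finset (Fin 4)),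
      (∀ i, Function.Injective (v i)) ∧
      (∀ x, x ∈ A x) ∧ (∀ x y, y ∈ A x → A y = A x) ∧
      (∃ a b : Fin 4, a ≠ b ∧ Clones v a b ∧ ¬ SimilarAllies v A a b) ∧
      (∃ a b : Fin 4, a ≠ b ∧ SimilarAllies v A a b ∧ ¬ Clones v a b) := by
  refine ⟨1, fun _ c => c.val, fun c => if c = 0 then {0} else {1, 2, 3}, ?_⟩
  constructor
  · intro i x y h
    exact Fin.val_injective h
  refine ⟨by decide, by decide, ⟨0, 1, by decide, ?_, by unfold SimilarAllies; decide⟩, ⟨1, 3, by decide, ?_, by unfold Clones; decide⟩⟩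
  · intro i e _ _
    revert e i; decide
  · refine ⟨by decide, ?_⟩
    intro i e he
    revert he; revert e i; decide
end

section
/- For any deterministic alliance-aware voting rule satisfying resistance to alliance-splitting, no election can have two distinct independent winners. -/
variable {C : Type*} [DecidableEq C]

/-- `P` is a partition of the candidate set into (nonempty) alliances. -/
def IsPartition (P : Finset (Finset C)) : Prop :=
  (∀ A ∈ P, A.Nonempty) ∧ ∀ c : C, ∃! A, A ∈ P ∧ c ∈ A

/-- `P'` is obtained from `P` by splitting the alliance `A` into the two nonempty
disjoint parts `A₁` and `A₂`. -/
def SplitOf (P P' : Finset (Finset C)) (A A₁ A₂ : Finset C) : Prop :=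
  A ∈ P ∧ A₁.Nonempty ∧ A₂.Nonempty ∧ Disjoint A₁ A₂ ∧ A₁ ∪ A₂ = A ∧
    P' = insert A₁ (insert A₂ (P.erase A))

/-- An alliance-aware rule `f` (the voters are fixed, so `f` only depends on the
alliance structure) is resistant to alliance-splitting: splitting a losing
alliance does not change the winner. -/
def ResistantToSplitting (f : Finset (Finset C) → C) : Prop :=
  ∀ P P' A A₁ A₂, IsPartition P → SplitOf P P' A A₁ A₂ → f P ∉ A → f P' = f P

/-- `c` is an independent winner of the election with alliance structure `P`:
`c` wins the election obtained by splitting `A(c)` into `{c}` and `A(c) \ {c}`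
(by convention this election is the original one when `A(c) = {c}`). -/
def IndependentWinner (f : Finset (Finset C) → C) (P : Finset (Finset C)) (c : C) : Prop :=
  ∃ A, A ∈ P ∧ c ∈ A ∧
    (if A = {c} then f P = c
     else f (insert {c} (insert (A.erase c) (P.erase A))) = c)

lemma alliance_unique {P : Finset (Finset C)} (hP : IsPartition P) {A B : Finset C}
    (hA : A ∈ P) (hB : B ∈ P) {c : C} (hcA : c ∈ A) (hcB : c ∈ B) : A = B := by
  obtain ⟨D, _, hu⟩ := hP.2 c
  rw [hu A ⟨hA, hcA⟩, hu B ⟨hB, hcB⟩]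

lemma erase_nonempty_of_ne {A : Finset C} {c : C} (hc : c ∈ A) (h : A ≠ {c}) :
    (A.erase c).Nonempty := by
  rw [Finset.nonempty_iff_ne_empty]
  intro he
  apply h
  apply Finset.Subset.antisymm
  · intro x hx
    rcases eq_or_ne x c with rfl | hxc
    · simp
    · exact absurd (Finset.mem_erase.2 ⟨hxc, hx⟩) (by simp [he])
  · simpa using hc

lemma splitOf_single {P : Finset (Finset C)} {A : Finset C} {c : C}
    (hA : A ∈ P) (hc : c ∈ A) (hne : A ≠ {c}) :
    SplitOf P (insert {c} (insert (A.erase c) (P.erase A))) A {c} (A.erase c) := by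
  refine ⟨hA, ⟨c, by simp⟩, erase_nonempty_of_ne hc hne, ?_, ?_, rfl⟩
  · simp [Finset.disjoint_left]
  · ext x
    by_cases hx : x = c <;> simp [hx, hc]

lemma split_isPartition {P P' : Finset (Finset C)} {A A₁ A₂ : Finset C} (hP : IsPartition P)
    (hs : SplitOf P P' A A₁ A₂) : IsPartition P' := by
  obtain ⟨hAP, hA₁, hA₂, hdisj, hunion, rfl⟩ := hs
  constructor
  · intro B hB
    rcases Finset.mem_insert.1 hB with rfl | hB
    · exact hA₁
    rcases Finset.mem_insert.1 hB with rfl | hB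
    · exact hA₂
    · exact hP.1 B (Finset.mem_of_mem_erase hB)
  · intro c
    obtain ⟨B, ⟨hBP, hcB⟩, huniq⟩ := hP.2 c
    by_cases hBA : B = A
    · subst hBA
      have hc12 : c ∈ A₁ ∪ A₂ := hunion ▸ hcB
      rcases Finset.mem_union.1 hc12 with hc1 | hc2
      · refine ⟨A₁, ⟨Finset.mem_insert_self _ _, hc1⟩, ?_⟩
        rintro B' ⟨hB', hcB'⟩
        rcases Finset.mem_insert.1 hB' with rfl | hB'
        · rfl
        rcases Finset.mem_insert.1 hB' with rfl | hB'
        · exact absurd hc1 (Finset.disjoint_right.1 hdisj hcB')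
        · exact absurd (huniq B' ⟨Finset.mem_of_mem_erase hB', hcB'⟩)
            (Finset.ne_of_mem_erase hB')
      · refine ⟨A₂, ⟨Finset.mem_insert_of_mem (Finset.mem_insert_self _ _), hc2⟩, ?_⟩
        rintro B' ⟨hB', hcB'⟩
        rcases Finset.mem_insert.1 hB' with rfl | hB'
        · exact absurd hc2 (Finset.disjoint_left.1 hdisj hcB')
        rcases Finset.mem_insert.1 hB' with rfl | hB'
        · rfl
        · exact absurd (huniq B' ⟨Finset.mem_of_mem_erase hB', hcB'⟩)
            (Finset.ne_of_mem_erase hB')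
    · refine ⟨B, ⟨?_, hcB⟩, ?_⟩
      · exact Finset.mem_insert_of_mem (Finset.mem_insert_of_mem
          (Finset.mem_erase.2 ⟨hBA, hBP⟩))
      · rintro B' ⟨hB', hcB'⟩
        rcases Finset.mem_insert.1 hB' with rfl | hB'
        · have : c ∈ A := hunion ▸ Finset.mem_union_left _ hcB'
          exact absurd (huniq A ⟨hAP, this⟩).symm hBA
        rcases Finset.mem_insert.1 hB' with rfl | hB'
        · have : c ∈ A := hunion ▸ Finset.mem_union_right _ hcB'
          exact absurd (huniq A ⟨hAP, this⟩).symm hBA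
        · exact huniq B' ⟨Finset.mem_of_mem_erase hB', hcB'⟩

/-- For any deterministic alliance-aware rule satisfying resistance to
alliance-splitting, no election can have two distinct independent winners. -/
theorem independent_winner_unique (f : Finset (Finset C) → C)
    (hf : ResistantToSplitting f) (P : Finset (Finset C)) (hP : IsPartition P)
    (c₁ c₂ : C) (h₁ : IndependentWinner f P c₁) (h₂ : IndependentWinner f P c₂) :
    c₁ = c₂ := by
  obtain ⟨A₁, hA₁P, hc₁, hw₁⟩ := h₁
  obtain ⟨A₂, hA₂P, hc₂, hw₂⟩ := h₂
  by_contra hne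
  have hne' : c₂ ≠ c₁ := fun h => hne h.symm
  by_cases hAA : A₁ = A₂
  · -- same alliance
    subst hAA
    have hns₁ : A₁ ≠ {c₁} := by rintro rfl; exact hne' (by simpa using hc₂)
    have hns₂ : A₁ ≠ {c₂} := by rintro rfl; exact hne (by simpa using hc₁)
    rw [if_neg hns₁] at hw₁
    rw [if_neg hns₂] at hw₂
    have hc₂e : c₂ ∈ A₁.erase c₁ := Finset.mem_erase.2 ⟨hne', hc₂⟩
    have hc₁e : c₁ ∈ A₁.erase c₂ := Finset.mem_erase.2 ⟨hne, hc₁⟩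
    by_cases hsmall : A₁.erase c₁ = {c₂}
    · -- A₁ = {c₁, c₂}
      have hA : A₁ = {c₁, c₂} := by rw [← Finset.insert_erase hc₁, hsmall]
      have hsmall' : A₁.erase c₂ = {c₁} := by
        rw [hA, Finset.erase_insert_of_ne hne]; simp
      rw [hsmall] at hw₁
      rw [hsmall'] at hw₂
      rw [Finset.insert_comm] at hw₂
      exact hne (hw₁.symm.trans hw₂)
    · -- |A₁| ≥ 3
      have hsmall₂ : A₁.erase c₂ ≠ {c₁} := by
        intro h
        apply hsmall
        have hA : A₁ = {c₂, c₁} := by rw [← Finset.insert_erase hc₂, h]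
        rw [hA, Finset.erase_insert_of_ne hne']; simp
      have hPQ₁ : IsPartition (insert {c₁} (insert (A₁.erase c₁) (P.erase A₁))) :=
        split_isPartition hP (splitOf_single hA₁P hc₁ hns₁)
      have hPQ₂ : IsPartition (insert {c₂} (insert (A₁.erase c₂) (P.erase A₁))) :=
        split_isPartition hP (splitOf_single hA₁P hc₂ hns₂)
      have hmem₁ : A₁.erase c₁ ∈ insert {c₁} (insert (A₁.erase c₁) (P.erase A₁)) :=
        Finset.mem_insert_of_mem (Finset.mem_insert_self _ _)
      have hmem₂ : A₁.erase c₂ ∈ insert {c₂} (insert (A₁.erase c₂) (P.erase A₁)) :=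
        Finset.mem_insert_of_mem (Finset.mem_insert_self _ _)
      have key₁ := hf _ _ _ _ _ hPQ₁ (splitOf_single hmem₁ hc₂e hsmall)
        (by rw [hw₁]; exact Finset.notMem_erase _ _)
      have key₂ := hf _ _ _ _ _ hPQ₂ (splitOf_single hmem₂ hc₁e hsmall₂)
        (by rw [hw₂]; exact Finset.notMem_erase _ _)
      rw [hw₁] at key₁
      rw [hw₂] at key₂
      -- the two doubly-split elections coincide
      have h3₁ : A₁.erase c₁ ∉ P := by
        intro h
        have := alliance_unique hP hA₁P h hc₂ hc₂e
        exact Finset.notMem_erase c₁ A₁ (this ▸ hc₁)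
      have h3₂ : A₁.erase c₂ ∉ P := by
        intro h
        have := alliance_unique hP hA₂P h hc₁ hc₁e
        exact Finset.notMem_erase c₂ A₁ (this ▸ hc₂)
      have f1 : ({c₁} : Finset C) ≠ A₁.erase c₁ := by
        intro h; rw [← h] at hc₂e; exact hne' (Finset.mem_singleton.1 hc₂e)
      have f2 : ({c₂} : Finset C) ≠ A₁.erase c₂ := by
        intro h; rw [← h] at hc₁e; exact hne (Finset.mem_singleton.1 hc₁e)
      have hBB : (A₁.erase c₁).erase c₂ = (A₁.erase c₂).erase c₁ :=
        Finset.erase_right_comm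
      have hsets : insert {c₂} (insert ((A₁.erase c₁).erase c₂)
            ((insert {c₁} (insert (A₁.erase c₁) (P.erase A₁))).erase (A₁.erase c₁))) =
          insert {c₁} (insert ((A₁.erase c₂).erase c₁)
            ((insert {c₂} (insert (A₁.erase c₂) (P.erase A₁))).erase (A₁.erase c₂))) := by
        ext x
        simp only [Finset.mem_insert, Finset.mem_erase]
        have i1 : x = A₁.erase c₁ → x ∉ P := fun h => h ▸ h3₁
        have i2 : x = A₁.erase c₂ → x ∉ P := fun h => h ▸ h3₂
        have i3 : x = {c₁} → x ≠ A₁.erase c₁ := fun h => h ▸ f1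
        have i4 : x = {c₂} → x ≠ A₁.erase c₂ := fun h => h ▸ f2
        have i5 : x = (A₁.erase c₁).erase c₂ ↔ x = (A₁.erase c₂).erase c₁ := by rw [hBB]
        have i6 : x = (A₁.erase c₁).erase c₂ → x ≠ A₁.erase c₂ := by
          rintro rfl h
          have hh : c₁ ∈ (A₁.erase c₁).erase c₂ := h.symm ▸ hc₁e
          exact Finset.notMem_erase c₁ A₁ (Finset.mem_of_mem_erase hh)
        have i7 : x = (A₁.erase c₂).erase c₁ → x ≠ A₁.erase c₁ := by
          rintro rfl h
          have hh : c₂ ∈ (A₁.erase c₂).erase c₁ := h.symm ▸ hc₂e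
          exact Finset.notMem_erase c₂ A₁ (Finset.mem_of_mem_erase hh)
        clear * - i1 i2 i3 i4 i5 i6 i7
        itauto
      rw [hsets, key₂] at key₁
      exact hne key₁.symm
  · -- different alliances
    have hc₁n : c₁ ∉ A₂ := fun h => hAA (alliance_unique hP hA₁P hA₂P hc₁ h)
    have hc₂n : c₂ ∉ A₁ := fun h => hAA (alliance_unique hP hA₁P hA₂P h hc₂)
    by_cases hs₁ : A₁ = {c₁} <;> by_cases hs₂ : A₂ = {c₂}
    · rw [if_pos hs₁] at hw₁
      rw [if_pos hs₂] at hw₂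
      exact hne (hw₁.symm.trans hw₂)
    · rw [if_pos hs₁] at hw₁
      rw [if_neg hs₂] at hw₂
      have := hf _ _ _ _ _ hP (splitOf_single hA₂P hc₂ hs₂) (by rw [hw₁]; exact hc₁n)
      rw [hw₁, hw₂] at this
      exact hne this.symm
    · rw [if_neg hs₁] at hw₁
      rw [if_pos hs₂] at hw₂
      have := hf _ _ _ _ _ hP (splitOf_single hA₁P hc₁ hs₁) (by rw [hw₂]; exact hc₂n)
      rw [hw₁, hw₂] at this
      exact hne this
    · rw [if_neg hs₁] at hw₁
      rw [if_neg hs₂] at hw₂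
      have hPQ₁ : IsPartition (insert {c₁} (insert (A₁.erase c₁) (P.erase A₁))) :=
        split_isPartition hP (splitOf_single hA₁P hc₁ hs₁)
      have hPQ₂ : IsPartition (insert {c₂} (insert (A₂.erase c₂) (P.erase A₂))) :=
        split_isPartition hP (splitOf_single hA₂P hc₂ hs₂)
      have hmem₁ : A₂ ∈ insert {c₁} (insert (A₁.erase c₁) (P.erase A₁)) :=
        Finset.mem_insert_of_mem (Finset.mem_insert_of_mem
          (Finset.mem_erase.2 ⟨fun h => hAA h.symm, hA₂P⟩))
      have hmem₂ : A₁ ∈ insert {c₂} (insert (A₂.erase c₂) (P.erase A₂)) :=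
        Finset.mem_insert_of_mem (Finset.mem_insert_of_mem
          (Finset.mem_erase.2 ⟨hAA, hA₁P⟩))
      have key₁ := hf _ _ _ _ _ hPQ₁ (splitOf_single hmem₁ hc₂ hs₂)
        (by rw [hw₁]; exact hc₁n)
      have key₂ := hf _ _ _ _ _ hPQ₂ (splitOf_single hmem₂ hc₁ hs₁)
        (by rw [hw₂]; exact hc₂n)
      rw [hw₁] at key₁
      rw [hw₂] at key₂
      have g1 : ({c₂} : Finset C) ≠ A₁ := by
        intro h; exact hc₂n (h ▸ Finset.mem_singleton_self c₂)
      have g2 : ({c₁} : Finset C) ≠ A₂ := by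
        intro h; exact hc₁n (h ▸ Finset.mem_singleton_self c₁)
      have g3 : A₂.erase c₂ ≠ A₁ := by
        intro h
        obtain ⟨a, ha⟩ := erase_nonempty_of_ne hc₂ hs₂
        exact hAA (alliance_unique hP hA₁P hA₂P (h ▸ ha) (Finset.mem_of_mem_erase ha))
      have g4 : A₁.erase c₁ ≠ A₂ := by
        intro h
        obtain ⟨a, ha⟩ := erase_nonempty_of_ne hc₁ hs₁
        exact hAA (alliance_unique hP hA₁P hA₂P (Finset.mem_of_mem_erase ha) (h ▸ ha))
      have hsets : insert {c₂} (insert (A₂.erase c₂)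
            ((insert {c₁} (insert (A₁.erase c₁) (P.erase A₁))).erase A₂)) =
          insert {c₁} (insert (A₁.erase c₁)
            ((insert {c₂} (insert (A₂.erase c₂) (P.erase A₂))).erase A₁)) := by
        ext x
        simp only [Finset.mem_insert, Finset.mem_erase]
        have i1 : x = {c₂} → x ≠ A₁ := fun h => h ▸ g1
        have i2 : x = {c₁} → x ≠ A₂ := fun h => h ▸ g2
        have i3 : x = A₂.erase c₂ → x ≠ A₁ := fun h => h ▸ g3
        have i4 : x = A₁.erase c₁ → x ≠ A₂ := fun h => h ▸ g4
        clear * - i1 i2 i3 i4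
        itauto
      rw [hsets, key₂] at key₁
      exact hne key₁.symm
end

section
/- Removing a candidate c from an election with alliances leaves the alliance-aware maximin score of every ally of c unchanged, and does not decrease the alliance-aware maximin score of any opponent of c. -/
/-- `Pref v a b` is the number of voters preferring `a` to `b`. -/
def Pref {C : Type*} [Fintype C] {n : ℕ} (v : Fin n → C → ℕ) (a b : C) : ℕ :=
  (Finset.univ.filter (fun i => v i a < v i b)).card

/-- The alliance-aware maximin score of `x` on candidate set `Cs`:
the minimum over the opponents `x'` of `x` (candidates of `Cs` outside `A x`)
of `Pref x x'`. -/
noncomputable def aaMaximinScore {C : Type*} [Fintype C] [DecidableEq C] {n : ℕ}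
    (Cs : Finset C) (A : C → Finset C) (v : Fin n → C → ℕ) (x : C) : ℕ∞ :=
  ((Cs \ A x).inf (fun y => (Pref v x y : ℕ∞)))

/-- Removing a candidate `c` leaves the alliance-aware maximin score of every
ally of `c` unchanged, and does not decrease the alliance-aware maximin score of
any opponent of `c`. -/
theorem aaMaximin_remove_candidate {C : Type*} [Fintype C] [DecidableEq C] {n : ℕ}
    (v : Fin n → C → ℕ) (hinj : ∀ i, Function.Injective (v i))
    (Cs : Finset C) (A : C → Finset C)
    (hA1 : ∀ x, x ∈ A x) (hA2 : ∀ x y, y ∈ A x → A y = A x)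
    (hAsub : ∀ x ∈ Cs, A x ⊆ Cs)
    (c : C) (hc : c ∈ Cs)
    (htwo : ∃ x ∈ Cs.erase c, ∃ y ∈ Cs.erase c, y ∉ A x) :
    (∀ x ∈ Cs, x ∈ A c → x ≠ c →
        aaMaximinScore (Cs.erase c) A v x = aaMaximinScore Cs A v x) ∧
    (∀ x ∈ Cs, x ∉ A c →
        aaMaximinScore Cs A v x ≤ aaMaximinScore (Cs.erase c) A v x) := by
  constructor
  · intro x hx hxA hxc
    have hAx : A x = A c := hA2 c x hxA
    have hce : c ∉ Cs \ A x := by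
      simp [hAx, hA1 c]
    unfold aaMaximinScore
    congr 1
    ext y
    simp only [Finset.mem_sdiff, Finset.mem_erase]
    constructor
    · rintro ⟨⟨_, hy⟩, hyA⟩; exact ⟨hy, hyA⟩
    · rintro ⟨hy, hyA⟩
      refine ⟨⟨?_, hy⟩, hyA⟩
      rintro rfl
      exact hce (by simp [hy, hyA])
  · intro x hx hxA
    apply Finset.inf_mono
    intro y hy
    simp only [Finset.mem_sdiff, Finset.mem_erase] at hy ⊢
    exact ⟨hy.1.2, hy.2⟩
end

section
/- If a₁ and a₂ are similar allies in an election with alliances, then for every common opponent b, removing a₂ leaves both the alliance-aware plurality score and the alliance-aware maximin score of b unchanged. -/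
/-- Alliance-aware plurality score of `b` on candidate set `Cs`: the number of
voters ranking no opponent of `b` above `b`. -/
def aaPluralityScore {C : Type*} [Fintype C] [DecidableEq C] {n : ℕ}
    (Cs : Finset C) (A : C → Finset C) (v : Fin n → C → ℕ) (b : C) : ℕ :=
  (Finset.univ.filter (fun i => ∀ y ∈ Cs, y ∉ A b → v i b < v i y)).card

/-- If `a₁` and `a₂` are similar allies then, for every common opponent `b`,
removing `a₂` leaves both the alliance-aware plurality score and the
alliance-aware maximin score of `b` unchanged. -/
theorem remove_similar_ally_preserves_opponent_scores
    {C : Type*} [Fintype C] [DecidableEq C] {n : ℕ}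
    (v : Fin n → C → ℕ) (hinj : ∀ i, Function.Injective (v i))
    (Cs : Finset C) (A : C → Finset C)
    (hA1 : ∀ x, x ∈ A x) (hA2 : ∀ x y, y ∈ A x → A y = A x)
    (a₁ a₂ : C) (ha₁ : a₁ ∈ Cs) (ha₂ : a₂ ∈ Cs) (hne : a₁ ≠ a₂)
    (hallies : a₂ ∈ A a₁)
    (hsim : ∀ e : C, e ∉ A a₁ → ∀ i : Fin n,
      ¬ (v i a₁ < v i e ∧ v i e < v i a₂) ∧ ¬ (v i a₂ < v i e ∧ v i e < v i a₁))
    (b : C) (hb : b ∈ Cs) (hopp : b ∉ A a₁) :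
    aaPluralityScore (Cs.erase a₂) A v b = aaPluralityScore Cs A v b ∧
    aaMaximinScore (Cs.erase a₂) A v b = aaMaximinScore Cs A v b := by
  have hA12 : A a₂ = A a₁ := hA2 a₁ a₂ hallies
  have hba₁ : b ≠ a₁ := fun h => hopp (h ▸ hA1 b)
  have hba₂ : b ≠ a₂ := fun h => hopp (hA12 ▸ h ▸ hA1 b)
  have ha₁b : a₁ ∉ A b := fun h => hopp ((hA2 b a₁ h) ▸ hA1 b)
  have ha₂b : a₂ ∉ A b := fun h => hopp (hA12 ▸ (hA2 b a₂ h) ▸ hA1 b)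
  -- key: for every voter, v i b < v i a₁ ↔ v i b < v i a₂
  have key : ∀ i, v i b < v i a₁ → v i b < v i a₂ := by
    intro i h
    by_contra h2
    push_neg at h2
    have h3 : v i a₂ < v i b := lt_of_le_of_ne h2 (fun h' => hba₂ ((hinj i h').symm))
    exact (hsim b hopp i).2 ⟨h3, h⟩
  have key' : ∀ i, v i b < v i a₂ → v i b < v i a₁ := by
    intro i h
    by_contra h2
    push_neg at h2
    have h3 : v i a₁ < v i b := lt_of_le_of_ne h2 (fun h' => hba₁ ((hinj i h').symm))
    exact (hsim b hopp i).1 ⟨h3, h⟩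
  constructor
  · unfold aaPluralityScore
    congr 1
    apply Finset.filter_congr
    intro i _
    constructor
    · intro h y hy hyA
      rcases eq_or_ne y a₂ with rfl | hya
      · exact key i (h a₁ (Finset.mem_erase.mpr ⟨hne, ha₁⟩) ha₁b)
      · exact h y (Finset.mem_erase.mpr ⟨hya, hy⟩) hyA
    · intro h y hy hyA
      exact h y (Finset.mem_of_mem_erase hy) hyA
  · unfold aaMaximinScore
    have hset : Cs \ A b = insert a₂ ((Cs.erase a₂) \ A b) := by
      ext x
      simp only [Finset.mem_sdiff, Finset.mem_insert, Finset.mem_erase]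
      constructor
      · rintro ⟨hx, hxA⟩
        rcases eq_or_ne x a₂ with rfl | hxa
        · exact Or.inl rfl
        · exact Or.inr ⟨⟨hxa, hx⟩, hxA⟩
      · rintro (rfl | ⟨⟨_, hx⟩, hxA⟩)
        · exact ⟨ha₂, ha₂b⟩
        · exact ⟨hx, hxA⟩
    rw [hset, Finset.inf_insert]
    symm
    rw [inf_eq_right]
    have ha₁mem : a₁ ∈ (Cs.erase a₂) \ A b :=
      Finset.mem_sdiff.mpr ⟨Finset.mem_erase.mpr ⟨hne, ha₁⟩, ha₁b⟩
    calc ((Cs.erase a₂) \ A b).inf (fun y => (Pref v b y : ℕ∞))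
        ≤ (Pref v b a₁ : ℕ∞) := Finset.inf_le ha₁mem
      _ ≤ (Pref v b a₂ : ℕ∞) := by
          simp only [Nat.cast_le]
          apply Finset.card_le_card
          intro i hi
          simp only [Finset.mem_filter] at *
          exact ⟨hi.1, key i hi.2⟩
end

section
/- In an election with alliances, if a candidate c has standard plurality score s > n/2, then every opponent of c has alliance-aware plurality score at most n − s < n/2; consequently IW-Plurality and SW-Plurality are majority-consistent. -/
/-- Standard plurality score of `x` on candidate set `Cs`. -/
def pluralityScore {C : Type*} [Fintype C] [DecidableEq C] {n : ℕ}
    (Cs : Finset C) (v : Fin n → C → ℕ) (x : C) : ℕ :=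
  (Finset.univ.filter (fun i => ∀ y ∈ Cs, y ≠ x → v i x < v i y)).card

/-- `x` maximizes `g` on `s`, and is minimal w.r.t. the fixed tie-breaking
linear order among the maximizers. -/
def IsBest {C : Type*} [LinearOrder C] {β : Type*} [LinearOrder β]
    (s : Finset C) (g : C → β) (x : C) : Prop :=
  x ∈ s ∧ (∀ y ∈ s, g y ≤ g x) ∧ ∀ y ∈ s, g y = g x → x ≤ y

/-- `w` is the IW-Plurality winner: first select the alliance of the candidate
with maximal alliance-aware plurality score; then elect, within that alliance,
the candidate with maximal standard plurality score. -/
def IWPluralityWinner {C : Type*} [Fintype C] [LinearOrder C] {n : ℕ}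
    (Cs : Finset C) (A : C → Finset C) (v : Fin n → C → ℕ) (w : C) : Prop :=
  ∃ t, IsBest Cs (fun x => aaPluralityScore Cs A v x) t ∧
    IsBest (Cs ∩ A t) (fun x => pluralityScore Cs v x) w

/-- `w` is the SW-Plurality winner: among the candidates with alliance-aware
plurality score `> n/2` (with all other candidates eliminated), elect the one
with the highest standard plurality score; if no candidate has score `> n/2`,
elect the candidate with the highest alliance-aware plurality score. -/
def SWPluralityWinner {C : Type*} [Fintype C] [LinearOrder C] {n : ℕ}
    (Cs : Finset C) (A : C → Finset C) (v : Fin n → C → ℕ) (w : C) : Prop :=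
  let T := Cs.filter (fun x => n < 2 * aaPluralityScore Cs A v x)
  (T.Nonempty ∧ IsBest T (fun x => pluralityScore T v x) w) ∨
  (T = ∅ ∧ IsBest Cs (fun x => aaPluralityScore Cs A v x) w)


lemma exists_isBest {C : Type*} [LinearOrder C] {β : Type*} [LinearOrder β]
    (s : Finset C) (hs : s.Nonempty) (g : C → β) : ∃ x, IsBest s g x := by
  obtain ⟨m, hm, hmax⟩ := s.exists_max_image g hs
  set M := s.filter (fun y => g y = g m) with hM
  have hMne : M.Nonempty := ⟨m, by simp [hM, hm]⟩
  have h1 := M.min'_mem hMne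
  simp only [hM, Finset.mem_filter] at h1
  refine ⟨M.min' hMne, h1.1, ?_, ?_⟩
  · intro y hy; rw [h1.2]; exact hmax y hy
  · intro y hy hgy
    exact M.min'_le y (by simp [hM, hy, hgy, h1.2])

lemma plur_pair_le {C : Type*} [Fintype C] [DecidableEq C] {n : ℕ}
    (D : Finset C) (v : Fin n → C → ℕ) {x y : C} (hx : x ∈ D) (hy : y ∈ D)
    (hxy : x ≠ y) : pluralityScore D v x + pluralityScore D v y ≤ n := by
  unfold pluralityScore
  rw [← Finset.card_union_of_disjoint]
  · calc _ ≤ (Finset.univ : Finset (Fin n)).card :=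
        Finset.card_le_card (Finset.subset_univ _)
    _ = n := by simp
  · rw [Finset.disjoint_left]
    intro i hi hi'
    simp only [Finset.mem_filter] at hi hi'
    exact absurd (hi.2 y hy hxy.symm) (not_lt.mpr (le_of_lt (hi'.2 x hx hxy)))


/-- If `c` has standard plurality score `s > n/2`, then every opponent of `c`
has alliance-aware plurality score at most `n - s < n/2`; consequently
IW-Plurality and SW-Plurality are majority-consistent. -/
theorem aa_plurality_majority {C : Type*} [Fintype C] [LinearOrder C] {n : ℕ}
    (v : Fin n → C → ℕ) (hinj : ∀ i, Function.Injective (v i))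
    (Cs : Finset C) (A : C → Finset C)
    (hA1 : ∀ x, x ∈ A x) (hA2 : ∀ x y, y ∈ A x → A y = A x)
    (hAsub : ∀ x ∈ Cs, A x ⊆ Cs)
    (c : C) (hc : c ∈ Cs)
    (hmaj : n < 2 * pluralityScore Cs v c) :
    (∀ b ∈ Cs, b ∉ A c →
      aaPluralityScore Cs A v b ≤ n - pluralityScore Cs v c ∧
      2 * (n - pluralityScore Cs v c) < n) ∧
    IWPluralityWinner Cs A v c ∧ SWPluralityWinner Cs A v c := by
  classical
  set s := pluralityScore Cs v c with hs
  have hsn : s ≤ n := by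
    have := Finset.card_filter_le (Finset.univ : Finset (Fin n))
      (fun i => ∀ y ∈ Cs, y ≠ c → v i c < v i y)
    simpa [hs, pluralityScore] using this
  -- aa score of c is at least s
  have haac : s ≤ aaPluralityScore Cs A v c := by
    apply Finset.card_le_card
    intro i hi
    simp only [Finset.mem_filter] at hi ⊢
    exact ⟨hi.1, fun y hy hyA => hi.2 y hy (fun h => hyA (h ▸ hA1 c))⟩
  -- key bound for opponents
  have hkey : ∀ b ∈ Cs, b ∉ A c → aaPluralityScore Cs A v b ≤ n - s := by
    intro b hb hbA
    have hcb : c ∉ A b := fun h => hbA ((hA2 b c h) ▸ hA1 b)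
    have hdisj : aaPluralityScore Cs A v b + s ≤ n := by
      rw [hs]
      unfold aaPluralityScore pluralityScore
      rw [← Finset.card_union_of_disjoint]
      · calc _ ≤ (Finset.univ : Finset (Fin n)).card :=
            Finset.card_le_card (Finset.subset_univ _)
        _ = n := by simp
      · rw [Finset.disjoint_left]
        intro i hi hi'
        simp only [Finset.mem_filter] at hi hi'
        have h1 := hi.2 c hc hcb
        have h2 := hi'.2 b hb (fun h => hbA (h ▸ hA1 c))
        exact absurd h1 (not_lt.mpr (le_of_lt h2))
    omega
  have hhalf : 2 * (n - s) < n := by omega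
  refine ⟨fun b hb hbA => ⟨hkey b hb hbA, hhalf⟩, ?_, ?_⟩
  · -- IW
    obtain ⟨t, ht⟩ := exists_isBest Cs ⟨c, hc⟩ (fun x => aaPluralityScore Cs A v x)
    obtain ⟨htC, htmax, httie⟩ := ht
    have htA : t ∈ A c := by
      by_contra htA
      have h1 := hkey t htC htA
      have h2 := htmax c hc
      simp only at h2
      omega
    have hAtc : A t = A c := hA2 c t htA
    refine ⟨t, ⟨htC, htmax, httie⟩, ?_, ?_, ?_⟩
    · exact Finset.mem_inter.mpr ⟨hc, hAtc ▸ hA1 c⟩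
    · intro y hy
      rcases eq_or_ne y c with rfl | hyc
      · exact le_refl _
      · have := plur_pair_le Cs v (Finset.mem_inter.mp hy).1 hc hyc
        simp only
        omega
    · intro y hy hgy
      rcases eq_or_ne y c with rfl | hyc
      · exact le_refl _
      · exfalso
        have := plur_pair_le Cs v (Finset.mem_inter.mp hy).1 hc hyc
        simp only at hgy
        omega
  · -- SW
    simp only [SWPluralityWinner]
    have hcT : c ∈ Cs.filter (fun x => n < 2 * aaPluralityScore Cs A v x) := by
      simp only [Finset.mem_filter]
      exact ⟨hc, by omega⟩
    set T := Cs.filter (fun x => n < 2 * aaPluralityScore Cs A v x) with hT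
    have hTsub : T ⊆ Cs := Finset.filter_subset _ _
    have hplurT : s ≤ pluralityScore T v c := by
      apply Finset.card_le_card
      intro i hi
      simp only [Finset.mem_filter] at hi ⊢
      exact ⟨hi.1, fun y hy => hi.2 y (hTsub hy)⟩
    left
    refine ⟨⟨c, hcT⟩, hcT, ?_, ?_⟩
    · intro y hy
      rcases eq_or_ne y c with rfl | hyc
      · exact le_refl _
      · have := plur_pair_le T v hy hcT hyc
        simp only
        omega
    · intro y hy hgy
      rcases eq_or_ne y c with rfl | hyc
      · exact le_refl _
      · exfalso
        have := plur_pair_le T v hy hcT hyc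
        simp only at hgy
        omega
end

section
/- Splitting a losing alliance strictly weakly decreases alliance-aware maximin scores of its members and leaves scores of members of other alliances unchanged: if alliance A is split into nonempty disjoint A₁, A₂ with A₁ ∪ A₂ = A, then for every c ∈ A the new alliance-aware maximin score of c is at most its old one, and for every c ∉ A the score is unchanged. Consequently IW-Maximin is resistant to alliance-splitting. -/
/-- Standard maximin score of `x` on candidate set `Cs`: the minimum over the
other candidates `y` of `Pref x y`. -/
noncomputable def maximinScore {C : Type*} [Fintype C] [DecidableEq C] {n : ℕ}
    (Cs : Finset C) (v : Fin n → C → ℕ) (x : C) : ℕ∞ :=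
  (Cs.erase x).inf (fun y => (Pref v x y : ℕ∞))

/-- `w` is the IW-Maximin winner: first select the alliance of the candidate
with maximal alliance-aware maximin score; then elect, within that alliance,
the candidate with maximal standard maximin score. -/
def IWMaximinWinner {C : Type*} [Fintype C] [LinearOrder C] {n : ℕ}
    (Cs : Finset C) (A : C → Finset C) (v : Fin n → C → ℕ) (w : C) : Prop :=
  ∃ t, IsBest Cs (fun x => aaMaximinScore Cs A v x) t ∧
    IsBest (Cs ∩ A t) (fun x => maximinScore Cs v x) w

/-- `w` is the SW-Maximin winner: all candidates with alliance-aware maximin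
score `> n/2` advance to a runoff decided by standard Maximin on the restricted
election; if no candidate advances, the candidate with the highest
alliance-aware maximin score wins. -/
def SWMaximinWinner {C : Type*} [Fintype C] [LinearOrder C] {n : ℕ}
    (Cs : Finset C) (A : C → Finset C) (v : Fin n → C → ℕ) (w : C) : Prop :=
  let T := Cs.filter (fun x => (n : ℕ∞) < 2 * aaMaximinScore Cs A v x)
  (T.Nonempty ∧ IsBest T (fun x => maximinScore T v x) w) ∨
  (T = ∅ ∧ IsBest Cs (fun x => aaMaximinScore Cs A v x) w)

/-- Splitting a losing alliance `AA` into nonempty disjoint parts `A₁, A₂`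
weakly decreases the alliance-aware maximin scores of its members and leaves
the scores of all other candidates unchanged; consequently IW-Maximin is
resistant to alliance-splitting. -/
theorem aa_maximin_split {C : Type*} [Fintype C] [LinearOrder C] {n : ℕ}
    (v : Fin n → C → ℕ) (hinj : ∀ i, Function.Injective (v i))
    (Cs : Finset C) (A : C → Finset C)
    (hA1 : ∀ x, x ∈ A x) (hA2 : ∀ x y, y ∈ A x → A y = A x)
    (hAsub : ∀ x ∈ Cs, A x ⊆ Cs)
    (htwo : ∃ x ∈ Cs, ∃ y ∈ Cs, y ∉ A x)
    (AA A₁ A₂ : Finset C) (hAA : ∀ x ∈ AA, A x = AA)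
    (h₁ : A₁.Nonempty) (h₂ : A₂.Nonempty) (hdis : Disjoint A₁ A₂)
    (hunion : A₁ ∪ A₂ = AA)
    (A' : C → Finset C)
    (hA' : A' = fun x => if x ∈ A₁ then A₁ else if x ∈ A₂ then A₂ else A x) :
    (∀ c ∈ Cs, c ∈ AA → aaMaximinScore Cs A' v c ≤ aaMaximinScore Cs A v c) ∧
    (∀ c ∈ Cs, c ∉ AA → aaMaximinScore Cs A' v c = aaMaximinScore Cs A v c) ∧
    (∀ w, IWMaximinWinner Cs A v w → w ∉ AA → IWMaximinWinner Cs A' v w) := by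
  have hsub1 : A₁ ⊆ AA := hunion ▸ Finset.subset_union_left
  have hsub2 : A₂ ⊆ AA := hunion ▸ Finset.subset_union_right
  have hnot : ∀ c, c ∉ AA → A' c = A c := by
    intro c hc
    rw [hA']
    simp only
    rw [if_neg (fun h => hc (hsub1 h)), if_neg (fun h => hc (hsub2 h))]
  have hle : ∀ c ∈ AA, A' c ⊆ A c := by
    intro c hc
    rw [hA']
    simp only
    rw [hAA c hc]
    split
    · exact hsub1
    · split
      · exact hsub2
      · exact le_refl AA
  have part1 : ∀ c ∈ Cs, c ∈ AA → aaMaximinScore Cs A' v c ≤ aaMaximinScore Cs A v c := by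
    intro c _ hc
    exact Finset.inf_mono (Finset.sdiff_subset_sdiff (le_refl Cs) (hle c hc))
  have part2 : ∀ c ∈ Cs, c ∉ AA → aaMaximinScore Cs A' v c = aaMaximinScore Cs A v c := by
    intro c _ hc
    unfold aaMaximinScore
    rw [hnot c hc]
  refine ⟨part1, part2, ?_⟩
  rintro w ⟨t, ⟨htCs, htmax, httie⟩, hwmem, hwmax, hwtie⟩ hw
  have hwAt : w ∈ A t := (Finset.mem_inter.mp hwmem).2
  have htAA : t ∉ AA := by
    intro h
    exact hw (by rw [← hAA t h]; exact hwAt)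
  have hAt' : A' t = A t := hnot t htAA
  refine ⟨t, ⟨htCs, ?_, ?_⟩, ?_⟩
  · intro y hy
    simp only
    rw [part2 t htCs htAA]
    by_cases hyAA : y ∈ AA
    · exact (part1 y hy hyAA).trans (htmax y hy)
    · rw [part2 y hy hyAA]; exact htmax y hy
  · intro y hy hyeq
    simp only at hyeq
    rw [part2 t htCs htAA] at hyeq
    by_cases hyAA : y ∈ AA
    · have h1 : aaMaximinScore Cs A v y ≤ aaMaximinScore Cs A v t := htmax y hy
      have h2 : aaMaximinScore Cs A v t ≤ aaMaximinScore Cs A v y := by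
        rw [← hyeq]; exact part1 y hy hyAA
      exact httie y hy (le_antisymm h1 h2)
    · rw [part2 y hy hyAA] at hyeq
      exact httie y hy hyeq
  · rw [hAt']
    exact ⟨hwmem, hwmax, hwtie⟩
end

section
/- IW-Maximin satisfies ally-no-harm: if the winner of an election E is not in alliance A(c), then after removing candidate c the winner is still not in A(c). -/
/-- IW-Maximin satisfies ally-no-harm: if the winner `w` of an election is not
in the alliance `A(c)`, then after removing the candidate `c` (from the
rankings and from its alliance) the winner is still not in `A(c)`. -/
theorem iw_maximin_ally_no_harm {C : Type*} [Fintype C] [LinearOrder C] {n : ℕ}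
    (v : Fin n → C → ℕ) (hinj : ∀ i, Function.Injective (v i))
    (Cs : Finset C) (A : C → Finset C)
    (hA1 : ∀ x, x ∈ A x) (hA2 : ∀ x y, y ∈ A x → A y = A x)
    (hAsub : ∀ x ∈ Cs, A x ⊆ Cs)
    (c : C) (hc : c ∈ Cs)
    (htwo : ∃ x ∈ Cs.erase c, ∃ y ∈ Cs.erase c, y ∉ A x)
    (A' : C → Finset C) (hA' : A' = fun x => (A x).erase c)
    (w : C) (hw : IWMaximinWinner Cs A v w) (hwin : w ∉ A c) :
    ∀ w', IWMaximinWinner (Cs.erase c) A' v w' → w' ∉ A c := by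

  subst hA'
  obtain ⟨t, ht, hwsel⟩ := hw
  have hwAt : w ∈ A t := (Finset.mem_inter.mp hwsel.1).2
  have htc : t ∉ A c := by
    intro h
    exact hwin ((hA2 c t h) ▸ hwAt)
  have htCs' : t ∈ Cs.erase c := by
    refine Finset.mem_erase.mpr ⟨?_, ht.1⟩
    intro h; exact htc (h ▸ hA1 c)
  -- aa score unchanged for members of A c
  have hsame : ∀ x, x ∈ A c → aaMaximinScore (Cs.erase c) (fun y => (A y).erase c) v x
      = aaMaximinScore Cs A v x := by
    intro x hx
    have hAx : A x = A c := hA2 c x hx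
    unfold aaMaximinScore
    congr 1
    ext y
    simp only [Finset.mem_sdiff, Finset.mem_erase, hAx]
    constructor
    · rintro ⟨⟨hy1, hy2⟩, hy3⟩
      exact ⟨hy2, fun hyc => hy3 ⟨hy1, hyc⟩⟩
    · rintro ⟨hy1, hy2⟩
      have : y ≠ c := fun h => hy2 (h ▸ hA1 c)
      exact ⟨⟨this, hy1⟩, fun h => hy2 h.2⟩
  -- aa score can only increase for t
  have hmono : aaMaximinScore Cs A v t ≤
      aaMaximinScore (Cs.erase c) (fun y => (A y).erase c) v t := by
    apply Finset.inf_mono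
    intro y hy
    simp only [Finset.mem_sdiff, Finset.mem_erase] at hy ⊢
    exact ⟨hy.1.2, fun h => hy.2 ⟨hy.1.1, h⟩⟩
  intro w' hw' hw'c
  obtain ⟨t', ht', hw'sel⟩ := hw'
  have hw'At' : w' ∈ (A t').erase c := (Finset.mem_inter.mp hw'sel.1).2
  have ht'c : t' ∈ A c := by
    have h1 : A w' = A t' := hA2 t' w' (Finset.mem_of_mem_erase hw'At')
    have h2 : A w' = A c := hA2 c w' hw'c
    exact (h2 ▸ h1) ▸ hA1 t'
  have ht'Cs : t' ∈ Cs := Finset.mem_of_mem_erase ht'.1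
  have e1 : aaMaximinScore Cs A v t' ≤ aaMaximinScore Cs A v t := ht.2.1 t' ht'Cs
  have e2 := ht'.2.1 t htCs'
  simp only at e2
  have hs' := hsame t' ht'c
  have key : aaMaximinScore Cs A v t' = aaMaximinScore Cs A v t :=
    le_antisymm e1 (hmono.trans (e2.trans_eq hs'))
  have keyF : aaMaximinScore (Cs.erase c) (fun y => (A y).erase c) v t
      = aaMaximinScore (Cs.erase c) (fun y => (A y).erase c) v t' :=
    le_antisymm e2 (by rw [hs', key]; exact hmono)
  have h1 : t' ≤ t := ht'.2.2 t htCs' keyF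
  have h2 : t ≤ t' := ht.2.2 t' ht'Cs key
  exact htc (le_antisymm h2 h1 ▸ ht'c)
end

section
/- The Schulze domination relation is transitive: if the strongest path from a to b is strictly stronger than the strongest path from b to a, and the strongest path from b to c is strictly stronger than that from c to b, then the strongest path from a to c is strictly stronger than that from c to a. -/
/-- The strength of a path `(c₁, ..., c_k)`:
`min (Pref c₁ c₂, Pref c₂ c₃, ..., Pref c_{k-1} c_k)`. -/
noncomputable def pathStrength {C : Type*} [Fintype C] {n : ℕ} (v : Fin n → C → ℕ) :
    List C → ℕ∞
  | [] => ⊤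
  | [_] => ⊤
  | a :: b :: rest => min (Pref v a b : ℕ∞) (pathStrength v (b :: rest))

/-- `l` is a path from `a` to `b`. -/
def IsPathFrom {C : Type*} (a b : C) (l : List C) : Prop :=
  2 ≤ l.length ∧ l.head? = some a ∧ l.getLast? = some b

/-- `P a b`: the maximal strength of a path from `a` to `b`. -/
noncomputable def pathPower {C : Type*} [Fintype C] {n : ℕ}
    (v : Fin n → C → ℕ) (a b : C) : ℕ∞ :=
  ⨆ (l : List C) (_ : IsPathFrom a b l), pathStrength v l

/-- Concatenating a path ending at `y` with a path starting at `y` yields a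
path whose strength is at least the min of the two strengths. -/
lemma pathStrength_append {C : Type*} [Fintype C] {n : ℕ} (v : Fin n → C → ℕ) :
    ∀ (l m : List C) (y : C), l.getLast? = some y → m.head? = some y →
      min (pathStrength v l) (pathStrength v m) ≤ pathStrength v (l ++ m.tail)
  | [], m, y, h, _ => by simp at h
  | [x], m, y, h, hm => by
    obtain ⟨t, rfl⟩ : ∃ t, m = y :: t := by
      cases m with
      | nil => simp at hm
      | cons p t => simp at hm; exact ⟨t, by rw [hm]⟩
    simp only [List.getLast?_singleton, Option.some.injEq] at h
    subst h
    simp [pathStrength]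
  | x₁ :: x₂ :: rest, m, y, h, hm => by
    have ih := pathStrength_append v (x₂ :: rest) m y
      (by rwa [List.getLast?_cons_cons] at h) hm
    have heq : (x₁ :: x₂ :: rest) ++ m.tail = x₁ :: x₂ :: (rest ++ m.tail) := by simp
    rw [heq]
    show min (min (Pref v x₁ x₂ : ℕ∞) (pathStrength v (x₂ :: rest)))
        (pathStrength v m) ≤
      min (Pref v x₁ x₂ : ℕ∞) (pathStrength v (x₂ :: (rest ++ m.tail)))
    have : pathStrength v (x₂ :: (rest ++ m.tail)) =
        pathStrength v ((x₂ :: rest) ++ m.tail) := by rw [List.cons_append]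
    rw [this, min_assoc]
    exact min_le_min le_rfl ih

lemma isPathFrom_append {C : Type*} {x y z : C} {l m : List C}
    (hl : IsPathFrom x y l) (hm : IsPathFrom y z m) :
    IsPathFrom x z (l ++ m.tail) := by
  obtain ⟨hl2, hlh, hll⟩ := hl
  obtain ⟨hm2, hmh, hml⟩ := hm
  obtain ⟨p, q, t, rfl⟩ : ∃ p q t, m = p :: q :: t := by
    match m, hm2 with
    | p :: q :: t, _ => exact ⟨p, q, t, rfl⟩
  refine ⟨?_, ?_, ?_⟩
  · simp only [List.length_append]
    omega
  · rw [List.head?_append]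
    cases l with
    | nil => simp at hl2
    | cons a t' => simpa using hlh
  · rw [List.getLast?_append]
    rw [List.getLast?_cons_cons] at hml
    simp [hml]

lemma pathPower_min {C : Type*} [Fintype C] {n : ℕ} (v : Fin n → C → ℕ)
    (x y z : C) : min (pathPower v x y) (pathPower v y z) ≤ pathPower v x z := by
  have key : ∀ (l : List C), IsPathFrom x y l → ∀ (m : List C), IsPathFrom y z m →
      min (pathStrength v l) (pathStrength v m) ≤ pathPower v x z := by
    intro l hl m hm
    calc min (pathStrength v l) (pathStrength v m)
        ≤ pathStrength v (l ++ m.tail) :=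
          pathStrength_append v l m y hl.2.2 hm.2.1
      _ ≤ pathPower v x z :=
          le_iSup₂ (f := fun (l : List C) (_ : IsPathFrom x z l) => pathStrength v l)
            (l ++ m.tail) (isPathFrom_append hl hm)
  rw [pathPower, pathPower]
  rw [iSup_inf_eq]
  refine iSup_le fun l => ?_
  rw [iSup_inf_eq]
  refine iSup_le fun hl => ?_
  rw [inf_iSup_eq]
  refine iSup_le fun m => ?_
  rw [inf_iSup_eq]
  exact iSup_le fun hm => key l hl m hm

/-- The Schulze domination relation is transitive: if the strongest path from
`a` to `b` is strictly stronger than that from `b` to `a`, and the strongest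
path from `b` to `c` is strictly stronger than that from `c` to `b`, then the
strongest path from `a` to `c` is strictly stronger than that from `c` to `a`. -/
theorem schulze_domination_transitive {C : Type*} [Fintype C] {n : ℕ}
    (v : Fin n → C → ℕ) (hinj : ∀ i, Function.Injective (v i))
    (a b c : C) (hab : a ≠ b) (hbc : b ≠ c) (hac : a ≠ c)
    (h₁ : pathPower v b a < pathPower v a b)
    (h₂ : pathPower v c b < pathPower v b c) :
    pathPower v c a < pathPower v a c := by
  by_contra h
  push_neg at h
  have L1 := pathPower_min v a b c
  have L2 := pathPower_min v c a b
  have L3 := pathPower_min v b c a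
  rcases le_total (pathPower v a b) (pathPower v b c) with h' | h'
  · -- min = P a b; derive P a b ≤ P b a
    have hca : pathPower v a b ≤ pathPower v c a := by
      calc pathPower v a b = min (pathPower v a b) (pathPower v b c) :=
            (min_eq_left h').symm
        _ ≤ pathPower v a c := L1
        _ ≤ pathPower v c a := h
    have : pathPower v a b ≤ pathPower v b a :=
      le_trans (le_min h' hca) L3
    exact absurd this (not_le.2 h₁)
  · -- min = P b c; derive P b c ≤ P c b
    have hca : pathPower v b c ≤ pathPower v c a := by
      calc pathPower v b c = min (pathPower v a b) (pathPower v b c) :=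
            (min_eq_right h').symm
        _ ≤ pathPower v a c := L1
        _ ≤ pathPower v c a := h
    have : pathPower v b c ≤ pathPower v c b :=
      le_trans (le_min hca h') L2
    exact absurd this (not_le.2 h₂)
end

section
/- There exists no basic alliance-aware voting rule extending a positional scoring rule other than Plurality: for any scoring vector with ℓ₂ > ℓ_m (m > 2 candidates), any alliance-aware rule that agrees with the scoring rule on no-ally elections and satisfies resistance to alliance-splitting and independence of similar allies yields a contradiction on the two-voter election with votes a≻b and b≻a after duplicating b. -/
namespace Stmt19

/-- The fixed two-voter profile on candidates `a = 0`, `b = 1`, `b' = 2`: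
vote 1 is `a ≻ b ≻ b'`, vote 2 is `b ≻ b' ≻ a` (so on `{a, b}` the votes are
`a ≻ b` and `b ≻ a`, and `b'` is a duplicate of `b` placed directly below it).
`v i x` is the position of `x` in vote `i` (smaller is better). -/
def v : Fin 2 → Fin 3 → ℕ := ![![0, 1, 2], ![2, 0, 1]]

/-- The position (0-indexed) of candidate `x` in vote `i` restricted to the
candidate set `S`. -/
def posIn (S : Finset (Fin 3)) (i : Fin 2) (x : Fin 3) : ℕ :=
  (S.filter (fun y => v i y < v i x)).card

/-- The positional score of `x` under the scoring vector `ℓ` on candidate set `S`. -/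
def scoreOn (ℓ : ℕ → ℕ) (S : Finset (Fin 3)) (x : Fin 3) : ℕ :=
  ∑ i : Fin 2, ℓ (posIn S i x)

/-- `P` is a partition (into nonempty alliances) of the candidate set `S`. -/
def IsPartitionOn (P : Finset (Finset (Fin 3))) (S : Finset (Fin 3)) : Prop :=
  (∀ A ∈ P, A.Nonempty) ∧ (∀ A ∈ P, A ⊆ S) ∧ ∀ x ∈ S, ∃! A, A ∈ P ∧ x ∈ A

/-- There is no basic alliance-aware rule extending a positional scoring rule
other than Plurality: for a scoring vector `(ℓ 0, ℓ 1, ℓ 2)` with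
`ℓ 0 ≥ ℓ 1 ≥ ℓ 2` and `ℓ 1 > ℓ 2`, no alliance-aware rule `f` can agree with
the scoring rule on no-ally elections, be resistant to alliance-splitting,
be independent of similar allies, and (WLOG) elect `a` in the symmetric
two-candidate no-ally election with votes `a ≻ b` and `b ≻ a`:
a contradiction arises after duplicating `b`. -/
theorem no_basic_rule_extends_non_plurality_scoring
    (ℓ : ℕ → ℕ) (h01 : ℓ 1 ≤ ℓ 0) (h12 : ℓ 2 ≤ ℓ 1) (hstrict : ℓ 2 < ℓ 1)
    (f : Finset (Finset (Fin 3)) → Fin 3)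
    (hscoring : ∀ (P : Finset (Finset (Fin 3))) (S : Finset (Fin 3)),
      IsPartitionOn P S → (∀ A ∈ P, A.card = 1) →
      ∀ x ∈ S, (∀ y ∈ S, y ≠ x → scoreOn ℓ S y < scoreOn ℓ S x) → f P = x)
    (hWLOG : f {{0}, {1}} = 0)
    (hres : ∀ (P : Finset (Finset (Fin 3))) (S A A₁ A₂ : Finset (Fin 3)),
      IsPartitionOn P S → A ∈ P → A₁.Nonempty → A₂.Nonempty → Disjoint A₁ A₂ →
      A₁ ∪ A₂ = A → f P ∉ A → f (insert A₁ (insert A₂ (P.erase A))) = f P)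
    (hsim : ∀ (P : Finset (Finset (Fin 3))) (S A : Finset (Fin 3)) (c c' : Fin 3),
      IsPartitionOn P S → A ∈ P → c ∈ A → c' ∈ A → c ≠ c' →
      (∀ b ∈ S, b ∉ A → ∀ i : Fin 2,
        ¬ (v i c < v i b ∧ v i b < v i c') ∧ ¬ (v i c' < v i b ∧ v i b < v i c)) →
      ((f P ∈ A → f (insert (A.erase c) (P.erase A)) ∈ A.erase c) ∧
       (f P ∉ A → f (insert (A.erase c) (P.erase A)) = f P))) :
    False := by

  -- Singleton-alliance election on all three candidates
  set P1 : Finset (Finset (Fin 3)) := {{0}, {1}, {2}} with hP1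
  set P2 : Finset (Finset (Fin 3)) := {{0}, {1, 2}} with hP2
  have hS : (posIn {0,1,2} 0 0 = 0 ∧ posIn {0,1,2} 1 0 = 2
      ∧ posIn {0,1,2} 0 1 = 1 ∧ posIn {0,1,2} 1 1 = 0
      ∧ posIn {0,1,2} 0 2 = 2 ∧ posIn {0,1,2} 1 2 = 1) := by decide
  obtain ⟨p1, p2, p3, p4, p5, p6⟩ := hS
  have h1 : f P1 = 1 := by
    apply hscoring P1 {0,1,2} (by rw [hP1]; unfold IsPartitionOn ExistsUnique; decide)
      (by decide) 1 (by decide)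
    intro y hy hne
    simp only [scoreOn, Fin.sum_univ_two]
    fin_cases y
    · change ℓ (posIn {0,1,2} 0 0) + ℓ (posIn {0,1,2} 1 0) <
        ℓ (posIn {0,1,2} 0 1) + ℓ (posIn {0,1,2} 1 1)
      rw [p1, p2, p3, p4]; omega
    · simp at hne
    · change ℓ (posIn {0,1,2} 0 2) + ℓ (posIn {0,1,2} 1 2) <
        ℓ (posIn {0,1,2} 0 1) + ℓ (posIn {0,1,2} 1 1)
      rw [p5, p6, p3, p4]; omega
  have hpart2 : IsPartitionOn P2 {0,1,2} := by
    rw [hP2]; unfold IsPartitionOn ExistsUnique; decide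
  have key : f P2 ∈ ({1, 2} : Finset (Fin 3)) := by
    by_contra hc
    have := hres P2 {0,1,2} {1,2} {1} {2} hpart2 (by rw [hP2]; decide) (by decide)
      (by decide) (by decide) (by decide) hc
    have he : insert ({1} : Finset (Fin 3)) (insert {2} (P2.erase {1,2})) = P1 := by
      rw [hP1, hP2]; decide
    rw [he, h1] at this
    rw [← this] at hc
    exact hc (by decide)
  have hs := hsim P2 {0,1,2} {1,2} 2 1 hpart2 (by rw [hP2]; decide) (by decide)
    (by decide) (by decide) (by decide)
  have h2 := hs.1 key
  have he2 : insert (({1,2} : Finset (Fin 3)).erase 2) (P2.erase {1,2})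
      = ({{0}, {1}} : Finset (Finset (Fin 3))) := by rw [hP2]; decide
  rw [he2, hWLOG] at h2
  exact absurd h2 (by decide)


end Stmt19
end
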